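/- Let a ∈ Adj(G,E) and b ∈ Adj(G,F) with Null(a) ⊆ Null(b) and Null(a*) = {0}. Define the operator t : E → F by D(t) = Range(a) and t(ax) := bx for x ∈ G. If t is closed (its graph is closed in E ⊕ F with respect to the norm), then t is graph regular and t* = (a*)^{-1} ∘ b*. -/

import Mathlib

open scoped RightActions Pointwise

noncomputable section

namespace CStarReg

variable (A : Type*)

/-- The orthogonal complement of a subset of a Hilbert C*-module with respect to the
`A`-valued inner product. -/
def ortho {E : Type*} [Zero A] [Inner A E] (S : Set E) : Set E :=
  {x | ∀ y ∈ S, (inner A x y : A) = 0}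

/-- A subset of a Hilbert C*-module is *essential* if its orthogonal complement is trivial. -/
def IsEssential {E : Type*} [Zero A] [Zero E] [Inner A E] (S : Set E) : Prop :=
  ortho A S = {0}

/-- A subset is *orthogonally closed* if it coincides with its double orthogonal complement. -/
def IsOrthoClosedSet {E : Type*} [Zero A] [Inner A E] (S : Set E) : Prop :=
  ortho A (ortho A S) = S

/-- The `A`-valued inner product on the direct sum `E ⊕ F` of two Hilbert C*-modules. -/
instance prodInner {E F : Type*} [Add A] [Inner A E] [Inner A F] : Inner A (E × F) :=
  ⟨fun p q => (inner A p.1 q.1 : A) + (inner A p.2 q.2 : A)⟩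

/-- A (not necessarily densely or essentially defined) `ℂ`-linear and `A`-linear operator
from `E` to `F`, encoded by its graph. -/
structure Unbounded (E F : Type*) [AddCommGroup E] [AddCommGroup F]
    [Module ℂ E] [Module ℂ F] [SMul Aᵐᵒᵖ E] [SMul Aᵐᵒᵖ F] where
  graph : Set (E × F)
  zero_mem : ((0 : E), (0 : F)) ∈ graph
  add_mem : ∀ ⦃p q : E × F⦄, p ∈ graph → q ∈ graph → p + q ∈ graph
  smul_mem : ∀ (c : ℂ) ⦃p : E × F⦄, p ∈ graph → c • p ∈ graph
  smulA_mem : ∀ (a : A) ⦃p : E × F⦄, p ∈ graph → (p.1 <• a, p.2 <• a) ∈ graph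
  single_valued : ∀ ⦃y : F⦄, ((0 : E), y) ∈ graph → y = 0

/-- An adjointable (everywhere defined, with everywhere defined adjoint) operator between
Hilbert C*-modules. -/
structure Adjointable (E F : Type*) [Inner A E] [Inner A F] where
  toFun : E → F
  adjFun : F → E
  adjoint_eq : ∀ (x : E) (y : F), (inner A (toFun x) y : A) = inner A x (adjFun y)

section Operators

variable {A}
variable {E F G H : Type*} [AddCommGroup E] [AddCommGroup F] [AddCommGroup G] [AddCommGroup H]
  [Module ℂ E] [Module ℂ F] [Module ℂ G] [Module ℂ H]
  [SMul Aᵐᵒᵖ E] [SMul Aᵐᵒᵖ F] [SMul Aᵐᵒᵖ G] [SMul Aᵐᵒᵖ H]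

namespace Unbounded

/-- The domain of an operator. -/
def dom (t : Unbounded A E F) : Set E := Prod.fst '' t.graph

/-- The range of an operator. -/
def ran (t : Unbounded A E F) : Set F := Prod.snd '' t.graph

/-- The null space of an operator. -/
def ker (t : Unbounded A E F) : Set E := {x | (x, (0 : F)) ∈ t.graph}

/-- `t ⊆ s`, i.e. `s` extends `t`. -/
def le (t s : Unbounded A E F) : Prop := t.graph ⊆ s.graph

end Unbounded

variable (A)

section WithInner

variable [Inner A E] [Inner A F] [Inner A G] [Inner A H] [Add A]

/-- The graph of the adjoint: `(y, z)` belongs to `adjSet A g` iff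
`⟪t x, y⟫ = ⟪x, z⟫` for all `(x, t x) ∈ g`. -/
def adjSet (g : Set (E × F)) : Set (F × E) :=
  {q | ∀ p ∈ g, (inner A p.2 q.1 : A) = inner A p.1 q.2}

end WithInner

/-- Composition of graphs. -/
def compSet (g₂ : Set (F × G)) (g₁ : Set (E × F)) : Set (E × G) :=
  {p | ∃ y, (p.1, y) ∈ g₁ ∧ (y, p.2) ∈ g₂}

/-- The graph of `1 + s` where `g` is the graph of `s`. -/
def oneAddSet (g : Set (E × E)) : Set (E × E) :=
  {p | ∃ y, (p.1, y) ∈ g ∧ p.2 = p.1 + y}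

variable {A}

namespace Unbounded

variable [Inner A E] [Inner A F] [Add A] [Zero A]

/-- The graph of the adjoint operator `t*`. -/
def adjGraph (t : Unbounded A E F) : Set (F × E) := adjSet A t.graph

/-- The domain of the adjoint operator `t*`. -/
def adjDom (t : Unbounded A E F) : Set F := Prod.fst '' (adjSet A t.graph)

/-- `s` is the adjoint of `t`. -/
def IsAdjointOf (s : Unbounded A F E) (t : Unbounded A E F) : Prop :=
  s.graph = adjSet A t.graph

/-- `t` is essentially defined, i.e. its domain has trivial orthogonal complement. -/
def EssentiallyDefined (t : Unbounded A E F) : Prop := IsEssential A t.dom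

/-- `t` is orthogonally closed, i.e. its graph coincides with its double orthogonal
complement in `E ⊕ F`. -/
def OrthoClosed (t : Unbounded A E F) : Prop := ortho A (ortho A t.graph) = t.graph

/-- `t` is graph regular: essentially defined, orthogonally closed, and its graph is
orthogonally complemented in `E ⊕ F`. -/
def GraphRegular (t : Unbounded A E F) : Prop :=
  t.EssentiallyDefined ∧ t.OrthoClosed ∧ t.graph + ortho A t.graph = Set.univ

/-- The graph of `t* t`. -/
def adjCompGraph (t : Unbounded A E F) : Set (E × E) := compSet (adjSet A t.graph) t.graph

/-- The graph of `t t*`. -/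
def compAdjGraph (t : Unbounded A E F) : Set (F × F) := compSet t.graph (adjSet A t.graph)

/-- `a = (1 + t* t)⁻¹` as an everywhere defined map. -/
def IsAt (t : Unbounded A E F) (a : E → E) : Prop :=
  ∀ x : E, (a x, x) ∈ oneAddSet t.adjCompGraph

/-- `a⋆ = (1 + t t*)⁻¹` as an everywhere defined map. -/
def IsAtStar (t : Unbounded A E F) (a : F → F) : Prop :=
  ∀ y : F, (a y, y) ∈ oneAddSet t.compAdjGraph

/-- `b = t ∘ a` as an everywhere defined map (where `a = (1 + t* t)⁻¹`, this is `b_t`). -/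
def IsBt (t : Unbounded A E F) (a : E → E) (b : E → F) : Prop :=
  ∀ x : E, (a x, b x) ∈ t.graph

end Unbounded

namespace Adjointable

variable [Inner A E] [Inner A F]

/-- Self-adjointness of an adjointable operator. -/
def IsSelfAdj (a : Adjointable A E E) : Prop := a.adjFun = a.toFun

/-- Positivity of an adjointable operator: `⟪x, a x⟫ ≥ 0` for all `x`. -/
def Nonneg [LE A] [Zero A] (a : Adjointable A E E) : Prop :=
  ∀ x : E, (0 : A) ≤ inner A x (a.toFun x)

/-- `r` is the positive square root of `a` in the C*-algebra `Adj(E)`. -/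
def IsPosSqrtOf [LE A] [Zero A] (r a : Adjointable A E E) : Prop :=
  r.Nonneg ∧ r.adjFun = r.toFun ∧ ∀ x : E, r.toFun (r.toFun x) = a.toFun x

/-- The kernel of an adjointable operator is trivial. -/
def KerTrivial (a : Adjointable A E F) : Prop := ∀ x : E, a.toFun x = 0 → x = 0

end Adjointable

variable (A)

/-- The graph of the projection onto a submodule `G` (with domain `G ⊕ G^⊥`). -/
def projSet [Zero A] [Inner A E] (G : Set E) : Set (E × E) :=
  {p | ∃ x ∈ G, ∃ y ∈ ortho A G, p = (x + y, x)}

/-- The restriction of a graph to those points whose first component lies in `D`. -/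
def restrictSet (g : Set (E × F)) (D : Set E) : Set (E × F) := {p ∈ g | p.1 ∈ D}

end Operators

end CStarReg

namespace CStarReg

/-- The Hilbert C*-module structure with a right `A`-action, as `CStarModule` was defined in
Mathlib of December 2024 (the current `CStarModule` uses a left action). -/
class CStarModuleRight (A E : Type*) [NonUnitalSemiring A] [StarRing A] [Module ℂ A]
    [AddCommGroup E] [Module ℂ E] [PartialOrder A] [SMul Aᵐᵒᵖ E] [Norm A] [Norm E]
    extends Inner A E where
  inner_add_right {x} {y} {z} : inner x (y + z) = inner x y + inner x z
  inner_self_nonneg {x} : 0 ≤ inner x x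
  inner_self {x} : inner x x = 0 ↔ x = 0
  inner_op_smul_right {a : A} {x y : E} : inner x (y <• a) = inner x y * a
  inner_smul_right_complex {z : ℂ} {x} {y} : inner x (z • y) = z • inner x y
  star_inner x y : star (inner x y) = inner y x
  norm_eq_sqrt_norm_inner_self x : ‖x‖ = Real.sqrt ‖inner x x‖

end CStarReg

/-!
The graph of `t` is the range of the column `T = (a, b) : G → E ⊕ F`, whose adjoint is
`T* (y, z) = a* y + b* z`. Hence the orthogonal complement of the graph is `Null(T*)`, and
`(y, z)` lies in the graph of `t*` iff `⟪b x, y⟫ = ⟪a x, z⟫` for all `x`, i.e. `b* y = a* z`.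
Everything else follows from `Range(T) + Null(T*) = E ⊕ F`, the closed range theorem for
Hilbert C⋆-modules: by the open mapping theorem `T*` is bounded below on the closed range `K`
of `T`, so `R = T T*` restricted to `K` is bounded below, and `R - γ` is bounded below by
`|Im γ|` because `⟪y, R y⟫ = ⟪T* y, T* y⟫` is self-adjoint. A point of the spectrum of `R`
with maximal `|Im|` lies on its boundary, so the spectrum is real and `R` is invertible.
Given `w`, solve `R (T x) = T T* w`; then `T*(w - T x)` is killed by `T`, hence is `0`.
-/

open scoped InnerProductSpace

namespace CStarReg

lemma abs_im_mul_norm_le_norm_sub_smul {X : Type*} [NormedAddCommGroup X] [NormedSpace ℂ X]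
    [StarAddMonoid X] [NormedStarGroup X] [StarModule ℂ X] {h p : X} (hh : IsSelfAdjoint h)
    (hp : IsSelfAdjoint p) (γ : ℂ) : |γ.im| * ‖p‖ ≤ ‖h - γ • p‖ := by
  -- the skew-adjoint part of `h - γ • p` is `(γ - conj γ) • p`, of norm `2 |Im γ| ‖p‖`
  have hskew : (h - γ • p) - star (h - γ • p) = -((γ - starRingEnd ℂ γ) • p) := by
    rw [star_sub, star_smul, hh.star_eq, hp.star_eq, sub_smul, Complex.star_def]; abel
  have : 2 * (|γ.im| * ‖p‖) ≤ 2 * ‖h - γ • p‖ :=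
    calc 2 * (|γ.im| * ‖p‖) = ‖(h - γ • p) - star (h - γ • p)‖ := by
          rw [hskew, norm_neg, norm_smul, Complex.sub_conj, norm_mul, Complex.norm_I, mul_one,
            Complex.norm_real, Real.norm_eq_abs, abs_mul, abs_two]
          ring
      _ ≤ ‖h - γ • p‖ + ‖star (h - γ • p)‖ := norm_sub_le _ _
      _ = 2 * ‖h - γ • p‖ := by rw [norm_star]; ring
  linarith

section Spectral

variable {X : Type*} [NormedAddCommGroup X] [NormedSpace ℂ X] [CompleteSpace X]

open Filter Topology

theorem mem_resolventSet_of_mem_closure {R : X →L[ℂ] X} {z : ℂ} {k : ℝ} (hk : 0 < k)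
    (hR : ∀ y, k * ‖y‖ ≤ ‖R y - z • y‖) (hz : z ∈ closure (resolventSet ℂ R)) :
    z ∈ resolventSet ℂ R := by
  nontriviality X →L[ℂ] X
  obtain ⟨μ, hμ, hμz⟩ := Metric.mem_closure_iff.mp hz (k / 2) (half_pos hk)
  rw [dist_comm, dist_eq_norm] at hμz
  obtain ⟨u, hu_eq⟩ : IsUnit (algebraMap ℂ (X →L[ℂ] X) μ - R) := hμ
  have hu : ∀ y, (u : X →L[ℂ] X) y = μ • y - R y := fun y => by
    simp [hu_eq, Algebra.algebraMap_eq_smul_one]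
  -- `μ - R` inherits the lower bound `k / 2` from `z - R`, which bounds its inverse by `2 / k`.
  have hu_inv : ‖(↑u⁻¹ : X →L[ℂ] X)‖ ≤ (k / 2)⁻¹ := by
    refine ContinuousLinearMap.opNorm_le_bound _ (by positivity) fun w => ?_
    set y := (↑u⁻¹ : X →L[ℂ] X) w
    have hw : w = μ • y - R y := by
      rw [← hu, ← mul_apply_eq_comp, u.mul_inv, one_apply_eq_self]
    have : k / 2 * ‖y‖ ≤ ‖w‖ := by
      calc k / 2 * ‖y‖ ≤ k * ‖y‖ - ‖μ - z‖ * ‖y‖ := by nlinarith [norm_nonneg y]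
        _ ≤ ‖R y - z • y‖ - ‖(μ - z) • y‖ := by rw [norm_smul]; linarith [hR y]
        _ ≤ ‖w‖ := by
          rw [hw, ← norm_neg (μ • y - R y)]
          refine (norm_sub_norm_le _ _).trans_eq (congrArg _ ?_)
          rw [sub_smul]; abel
    rw [← div_eq_inv_mul, le_div_iff₀ (half_pos hk)]
    linarith
  have hnear : ‖(algebraMap ℂ (X →L[ℂ] X) z - R) - u‖ < ‖(↑u⁻¹ : X →L[ℂ] X)‖⁻¹ := by
    calc ‖(algebraMap ℂ (X →L[ℂ] X) z - R) - u‖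
        = ‖algebraMap ℂ (X →L[ℂ] X) (z - μ)‖ := by rw [hu_eq, map_sub]; abel_nf
      _ ≤ ‖z - μ‖ := by
          rw [Algebra.algebraMap_eq_smul_one, norm_smul]
          exact mul_le_of_le_one_right (norm_nonneg _) ContinuousLinearMap.norm_id_le
      _ < k / 2 := by rwa [norm_sub_rev]
      _ ≤ ‖(↑u⁻¹ : X →L[ℂ] X)‖⁻¹ := by
          rw [le_inv_comm₀ (half_pos hk) (norm_pos_iff.mpr (Units.ne_zero _))]
          exact hu_inv
  exact (u.ofNearby _ hnear).isUnit

theorem isUnit_of_forall_norm_le {R : X →L[ℂ] X} {k : ℝ} (hk : 0 < k)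
    (h0 : ∀ y, k * ‖y‖ ≤ ‖R y‖) (him : ∀ (γ : ℂ) y, |γ.im| * ‖y‖ ≤ ‖R y - γ • y‖) :
    IsUnit R := by
  have hreal : ∀ z ∈ spectrum ℂ R, z.im = 0 := by
    by_contra! ⟨z, hz, hz_im⟩
    obtain ⟨l, hl, hl_max⟩ := (spectrum.isCompact R).exists_isMaxOn ⟨z, hz⟩
      (by fun_prop : Continuous fun w : ℂ => |w.im|).continuousOn
    have hl_im : 0 < |l.im| := (abs_pos.mpr hz_im).trans_le (hl_max hz)
    -- moving `l` vertically away from the real axis leaves the spectrum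
    refine hl (mem_resolventSet_of_mem_closure hl_im (him l) (mem_closure_of_tendsto
      (f := fun t : ℝ => l + (t * l.im : ℝ) * Complex.I) (b := 𝓝[>] 0) ?_ ?_))
    · exact tendsto_nhdsWithin_of_tendsto_nhds
        ((by fun_prop : Continuous _).tendsto' _ _ (by simp))
    · filter_upwards [self_mem_nhdsWithin] with t (ht : 0 < t)
      refine spectrum.notMem_iff.mp fun hmem => ?_
      have := hl_max hmem
      simp only [Set.mem_ofPred_eq, Complex.add_im, Complex.mul_im, Complex.ofReal_re,
        Complex.I_im, Complex.ofReal_im, Complex.I_re, mul_zero, mul_one, add_zero] at this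
      rw [show l.im + t * l.im = (1 + t) * l.im by ring, abs_mul,
        abs_of_pos (by linarith : 0 < 1 + t)] at this
      nlinarith
  rw [← spectrum.zero_notMem_iff ℂ, spectrum.notMem_iff]
  refine mem_resolventSet_of_mem_closure (R := R) (z := 0) hk (by simpa using h0)
    (mem_closure_of_tendsto (f := fun t : ℝ => (t : ℂ) * Complex.I) (b := 𝓝[>] 0) ?_ ?_)
  · exact tendsto_nhdsWithin_of_tendsto_nhds ((by fun_prop : Continuous _).tendsto' _ _ (by simp))
  · filter_upwards [self_mem_nhdsWithin] with t (ht : 0 < t)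
    refine spectrum.notMem_iff.mp fun hmem => ?_
    simpa [ht.ne'] using hreal _ hmem

end Spectral

lemma le_of_sq_le_mul {a b : ℝ} (hb : 0 ≤ b) (h : a ^ 2 ≤ a * b) : a ≤ b := by nlinarith

section HilbertModule

variable {B : Type*} [NonUnitalCStarAlgebra B] [PartialOrder B]
variable {M N : Type*} [NormedAddCommGroup M] [Module ℂ M] [SMul B M] [CStarModule B M]
  [NormedAddCommGroup N] [Module ℂ N] [SMul B N] [CStarModule B N]

lemma ext_inner_left {x y : M} (h : ∀ v : M, ⟪v, x⟫_B = ⟪v, y⟫_B) : x = y := by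
  rw [← sub_eq_zero, ← CStarModule.inner_self (A := B), CStarModule.inner_sub_right, h, sub_self]

lemma subset_ortho_ortho (S : Set M) : S ⊆ ortho B (ortho B S) := fun x hx y hy => by
  rw [← CStarModule.star_inner, hy x hx, star_zero]

lemma ortho_ortho_eq_of_add_ortho_eq_univ {S : Set M} (hS : S + ortho B S = Set.univ) :
    ortho B (ortho B S) = S := by
  refine (subset_antisymm ?_ (subset_ortho_ortho S))
  intro w hw
  obtain ⟨s, hs, v, hv, rfl⟩ : w ∈ S + ortho B S := hS ▸ Set.mem_univ w
  have hsv : ⟪s, v⟫_B = 0 := by rw [← CStarModule.star_inner, hv s hs, star_zero]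
  have hw : ⟪s + v, v⟫_B = 0 := hw v hv
  have hvv : ⟪v, v⟫_B = 0 := by
    calc ⟪v, v⟫_B = ⟪s + v, v⟫_B - ⟪s, v⟫_B := by
          rw [CStarModule.inner_add_left, add_sub_cancel_left]
      _ = 0 := by rw [hw, hsv, sub_zero]
  rw [CStarModule.inner_self.mp hvv]
  simpa using hs

namespace Adjointable

variable (t : Adjointable B M N)

lemma inner_toFun_right (y : N) (x : M) : ⟪y, t.toFun x⟫_B = ⟪t.adjFun y, x⟫_B := by
  rw [← CStarModule.star_inner, t.adjoint_eq, CStarModule.star_inner]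

def flip : Adjointable B N M := ⟨t.adjFun, t.toFun, fun y x => (t.inner_toFun_right y x).symm⟩

lemma map_add (x y : M) : t.toFun (x + y) = t.toFun x + t.toFun y :=
  ext_inner_left (B := B) fun v => by simp only [inner_toFun_right, CStarModule.inner_add_right]

lemma map_smul (c : ℂ) (x : M) : t.toFun (c • x) = c • t.toFun x :=
  ext_inner_left (B := B) fun v => by
    simp only [inner_toFun_right, CStarModule.inner_smul_right_complex]

lemma map_op_smul (b : B) (x : M) : t.toFun (b • x) = b • t.toFun x :=
  ext_inner_left (B := B) fun v => by
    simp only [inner_toFun_right, CStarModule.inner_op_smul_right]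

def toLinearMap : M →ₗ[ℂ] N := ⟨⟨t.toFun, t.map_add⟩, t.map_smul⟩

lemma map_sub (x y : M) : t.toFun (x - y) = t.toFun x - t.toFun y := t.toLinearMap.map_sub x y

lemma adjFun_sub (x y : N) : t.adjFun (x - y) = t.adjFun x - t.adjFun y := t.flip.map_sub x y

lemma ortho_range : ortho B (Set.range t.toFun) = {y | t.adjFun y = 0} := by
  ext y
  simp only [ortho, Set.forall_mem_range, Set.mem_ofPred_eq, t.inner_toFun_right]
  refine ⟨fun h => CStarModule.inner_self.mp (h _), fun h x => ?_⟩
  rw [h, CStarModule.inner_zero_left]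

variable [StarOrderedRing B]

lemma norm_toFun_sq_le (x : M) : ‖t.toFun x‖ ^ 2 ≤ ‖x‖ * ‖t.adjFun (t.toFun x)‖ := by
  rw [CStarModule.norm_sq_eq B, t.adjoint_eq]
  exact CStarModule.norm_inner_le M

lemma abs_im_mul_norm_le (γ : ℂ) (y : N) :
    |γ.im| * ‖y‖ ≤ ‖t.toFun (t.adjFun y) - γ • y‖ := by
  rcases (norm_nonneg y).eq_or_lt with hy | hy
  · rw [← hy, mul_zero]; exact norm_nonneg _
  have hself : IsSelfAdjoint ⟪y, t.toFun (t.adjFun y)⟫_B := by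
    rw [t.inner_toFun_right]; exact CStarModule.isSelfAdjoint_inner_self
  have : |γ.im| * ‖y‖ ^ 2 ≤ ‖y‖ * ‖t.toFun (t.adjFun y) - γ • y‖ :=
    calc |γ.im| * ‖y‖ ^ 2 = |γ.im| * ‖⟪y, y⟫_B‖ := by rw [CStarModule.norm_sq_eq B]
      _ ≤ ‖⟪y, t.toFun (t.adjFun y)⟫_B - γ • ⟪y, y⟫_B‖ :=
          abs_im_mul_norm_le_norm_sub_smul hself CStarModule.isSelfAdjoint_inner_self γ
      _ = ‖⟪y, t.toFun (t.adjFun y) - γ • y⟫_B‖ := by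
          rw [CStarModule.inner_sub_right, CStarModule.inner_smul_right_complex]
      _ ≤ ‖y‖ * ‖t.toFun (t.adjFun y) - γ • y‖ := CStarModule.norm_inner_le N
  nlinarith

lemma norm_toFun_le_sq_mul {C : ℝ} (hC : 0 ≤ C) {x : M} (hx : ‖x‖ ≤ C * ‖t.toFun x‖) :
    ‖t.toFun x‖ ≤ C ^ 2 * ‖t.toFun (t.adjFun (t.toFun x))‖ := by
  have h1 := t.norm_toFun_sq_le x
  have h2 : ‖t.adjFun (t.toFun x)‖ ^ 2 ≤ ‖t.toFun x‖ * ‖t.toFun (t.adjFun (t.toFun x))‖ :=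
    t.flip.norm_toFun_sq_le _
  have hs : ‖t.toFun x‖ ≤ C * ‖t.adjFun (t.toFun x)‖ := le_of_sq_le_mul (by positivity) <| by
    nlinarith [mul_le_mul_of_nonneg_right hx (norm_nonneg (t.adjFun (t.toFun x)))]
  refine le_of_sq_le_mul (by positivity) ?_
  nlinarith [pow_le_pow_left₀ (norm_nonneg _) hs 2]

variable [CompleteSpace M] [CompleteSpace N]

theorem continuous_toFun : Continuous t.toFun := by
  let _ : NormedSpace ℂ M := .ofCore (CStarModule.normedSpaceCore B)
  let _ : NormedSpace ℂ N := .ofCore (CStarModule.normedSpaceCore B)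
  refine t.toLinearMap.continuous_of_isClosed_graph ?_
  have : (t.toLinearMap.graph : Set (M × N)) =
      ⋂ v : N, {p | ⟪v, p.2⟫_B = ⟪t.adjFun v, p.1⟫_B} := by
    ext p
    simp only [SetLike.mem_coe, LinearMap.mem_graph_iff, Set.mem_iInter, Set.mem_ofPred_eq]
    refine ⟨fun h v => h ▸ t.inner_toFun_right v p.1, fun h => ?_⟩
    exact (ext_inner_left (B := B) fun v => (h v).trans (t.inner_toFun_right v p.1).symm)
  rw [this]
  exact isClosed_iInter fun v => isClosed_eq (by fun_prop) (by fun_prop)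

def toCLM : M →L[ℂ] N := ⟨t.toLinearMap, t.continuous_toFun⟩

theorem exists_adjFun_sub_eq_zero (ht : IsClosed (Set.range t.toFun)) (w : N) :
    ∃ x, t.adjFun (w - t.toFun x) = 0 := by
  let _ : NormedSpace ℂ M := .ofCore (CStarModule.normedSpaceCore B)
  let _ : NormedSpace ℂ N := .ofCore (CStarModule.normedSpaceCore B)
  set K := LinearMap.range (t.toCLM : M →ₗ[ℂ] N)
  have : CompleteSpace K := (show IsClosed (K : Set N) from ht).completeSpace_coe
  set T : M →L[ℂ] K := t.toCLM.rangeRestrict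
  obtain ⟨C, hC, hT⟩ := T.exists_preimage_norm_le (LinearMap.surjective_rangeRestrict _)
  set R : K →L[ℂ] K := T ∘L t.flip.toCLM ∘L K.subtypeL
  have hR0 : ∀ y : K, (C ^ 2)⁻¹ * ‖y‖ ≤ ‖R y‖ := by
    intro y
    obtain ⟨x, rfl, hxC⟩ := hT y
    rw [inv_mul_le_iff₀ (by positivity)]
    exact t.norm_toFun_le_sq_mul hC.le hxC
  have hunit := isUnit_of_forall_norm_le (by positivity) hR0 fun γ y => t.abs_im_mul_norm_le γ y
  obtain ⟨q, hq⟩ := (ContinuousLinearMap.isUnit_iff_bijective.mp hunit).2 (T (t.adjFun w))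
  obtain ⟨x, hx : t.toFun x = q⟩ := q.2
  refine ⟨x, ?_⟩
  have hker : t.toFun (t.adjFun (w - t.toFun x)) = 0 := by
    have : t.toFun (t.adjFun (t.toFun x)) = t.toFun (t.adjFun w) := by
      rw [hx]; exact congrArg Subtype.val hq
    rw [t.adjFun_sub, t.map_sub, this, sub_self]
  rw [← CStarModule.inner_self (A := B), ← t.inner_toFun_right, hker,
    CStarModule.inner_zero_right]

theorem range_add_ortho_range (ht : IsClosed (Set.range t.toFun)) :
    Set.range t.toFun + ortho B (Set.range t.toFun) = Set.univ := by
  refine Set.eq_univ_of_forall fun w => ?_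
  obtain ⟨x, hx⟩ := t.exists_adjFun_sub_eq_zero ht w
  exact ⟨t.toFun x, ⟨x, rfl⟩, w - t.toFun x, t.ortho_range ▸ hx, add_sub_cancel _ _⟩

end Adjointable

end HilbertModule

section Column

open WithCStarModule

variable {B : Type*} [NonUnitalCStarAlgebra B] [PartialOrder B]
variable {E F G : Type*} [NormedAddCommGroup E] [Module ℂ E] [SMul B E] [CStarModule B E]
  [NormedAddCommGroup F] [Module ℂ F] [SMul B F] [CStarModule B F]
  [NormedAddCommGroup G] [Module ℂ G] [SMul B G] [CStarModule B G]
  (a : Adjointable B G E) (b : Adjointable B G F)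

namespace Adjointable

theorem adjSet_range_prod :
    adjSet B (Set.range fun x => (a.toFun x, b.toFun x)) = {q | a.adjFun q.2 = b.adjFun q.1} := by
  ext q
  simp only [adjSet, Set.forall_mem_range, Set.mem_ofPred_eq, a.adjoint_eq, b.adjoint_eq]
  exact ⟨fun h => (ext_inner_left (B := B) h).symm, fun h x => by rw [h]⟩

variable [StarOrderedRing B]

/-- The column `x ↦ (a x, b x)`; the synonym `C⋆ᵐᵒᵈ` gives `E × F` the Hilbert module norm,
whose topology is the product topology. -/
def prod : Adjointable B G C⋆ᵐᵒᵈ(B, E × F) where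
  toFun x := (equiv B (E × F)).symm (a.toFun x, b.toFun x)
  adjFun p := a.adjFun p.1 + b.adjFun p.2
  adjoint_eq x p := by
    rw [prod_inner, CStarModule.inner_add_right]
    exact congrArg₂ (· + ·) (a.adjoint_eq x p.1) (b.adjoint_eq x p.2)

variable [CompleteSpace E] [CompleteSpace F] [CompleteSpace G]

theorem range_prod_add_ortho (h : IsClosed (Set.range fun x => (a.toFun x, b.toFun x))) :
    (Set.range fun x => (a.toFun x, b.toFun x)) +
      ortho B (Set.range fun x => (a.toFun x, b.toFun x)) = Set.univ :=
  (a.prod b).range_add_ortho_range (h.preimage uniformEquiv.continuous)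

theorem ortho_ortho_range_prod (h : IsClosed (Set.range fun x => (a.toFun x, b.toFun x))) :
    ortho B (ortho B (Set.range fun x => (a.toFun x, b.toFun x))) =
      Set.range fun x => (a.toFun x, b.toFun x) :=
  ortho_ortho_eq_of_add_ortho_eq_univ (M := C⋆ᵐᵒᵈ(B, E × F)) (range_prod_add_ortho a b h)

end Adjointable

end Column

section RightModule

open MulOpposite

variable {A : Type*} [NonUnitalCStarAlgebra A] [PartialOrder A]

instance opCStarModule {E : Type*} [AddCommGroup E] [Module ℂ E] [SMul Aᵐᵒᵖ E] [Norm E]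
    [CStarModuleRight A E] : CStarModule Aᵐᵒᵖ E where
  inner x y := op (inner A x y)
  inner_add_right := congrArg op CStarModuleRight.inner_add_right
  inner_self_nonneg := CStarModuleRight.inner_self_nonneg (A := A)
  inner_self := op_eq_zero_iff _ |>.trans CStarModuleRight.inner_self
  inner_op_smul_right := congrArg op CStarModuleRight.inner_op_smul_right
  inner_smul_right_complex := congrArg op CStarModuleRight.inner_smul_right_complex
  star_inner x y := congrArg op (CStarModuleRight.star_inner x y)
  norm_eq_sqrt_norm_inner_self := CStarModuleRight.norm_eq_sqrt_norm_inner_self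

def Adjointable.toOp {E F : Type*} [AddCommGroup E] [Module ℂ E] [SMul Aᵐᵒᵖ E] [Norm E]
    [CStarModuleRight A E] [AddCommGroup F] [Module ℂ F] [SMul Aᵐᵒᵖ F] [Norm F]
    [CStarModuleRight A F] (t : Adjointable A E F) : Adjointable Aᵐᵒᵖ E F :=
  ⟨t.toFun, t.adjFun, fun x y => congrArg op (t.adjoint_eq x y)⟩

end RightModule

section OpTransfer

open MulOpposite

variable {A X Y : Type*}

lemma ortho_op [Zero A] [Inner A X] [Inner Aᵐᵒᵖ X]
    (h : ∀ x y : X, inner Aᵐᵒᵖ x y = op (inner A x y)) (S : Set X) :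
    ortho Aᵐᵒᵖ S = ortho A S := by
  ext x
  simp only [ortho, Set.mem_ofPred_eq, h, op_eq_zero_iff]

lemma adjSet_op [Add A] [Inner A X] [Inner Aᵐᵒᵖ X] [Inner A Y] [Inner Aᵐᵒᵖ Y]
    (hX : ∀ x y : X, inner Aᵐᵒᵖ x y = op (inner A x y))
    (hY : ∀ x y : Y, inner Aᵐᵒᵖ x y = op (inner A x y)) (g : Set (X × Y)) :
    adjSet Aᵐᵒᵖ g = adjSet A g := by
  ext q
  simp only [adjSet, Set.mem_ofPred_eq, hX, hY, op_inj]

end OpTransfer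

section Quotient

variable {A : Type*} [NonUnitalCStarAlgebra A] [PartialOrder A]
variable {E F G : Type*}
  [NormedAddCommGroup E] [Module ℂ E] [SMul Aᵐᵒᵖ E] [CStarModuleRight A E]
  [NormedAddCommGroup F] [Module ℂ F] [SMul Aᵐᵒᵖ F] [CStarModuleRight A F]
  [NormedAddCommGroup G] [Module ℂ G] [SMul Aᵐᵒᵖ G] [CStarModuleRight A G]

/-- The operator `b a⁻¹` on `D = Range(a)`. -/
def Unbounded.quotient (a : Adjointable A G E) (b : Adjointable A G F)
    (hker : ∀ x, a.toFun x = 0 → b.toFun x = 0) : Unbounded A E F where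
  graph := Set.range fun x => (a.toFun x, b.toFun x)
  zero_mem := ⟨0, Prod.ext (map_zero a.toOp.toLinearMap) (map_zero b.toOp.toLinearMap)⟩
  add_mem := by
    rintro _ _ ⟨x, rfl⟩ ⟨y, rfl⟩
    exact ⟨x + y, Prod.ext (a.toOp.map_add x y) (b.toOp.map_add x y)⟩
  smul_mem := by
    rintro c _ ⟨x, rfl⟩
    exact ⟨c • x, Prod.ext (a.toOp.map_smul c x) (b.toOp.map_smul c x)⟩
  smulA_mem := by
    rintro m _ ⟨x, rfl⟩
    exact ⟨x <• m, Prod.ext (a.toOp.map_op_smul (MulOpposite.op m) x)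
      (b.toOp.map_op_smul (MulOpposite.op m) x)⟩
  single_valued := by
    rintro _ ⟨x, hx⟩
    rw [Prod.mk.injEq] at hx
    exact hx.2 ▸ hker x hx.1

end Quotient

end CStarReg

section Statements

open CStarReg Unbounded

variable {A : Type*} [NonUnitalCStarAlgebra A] [PartialOrder A] [StarOrderedRing A]
variable {E : Type*} [NormedAddCommGroup E] [Module ℂ E] [SMul Aᵐᵒᵖ E] [CStarModuleRight A E]
  [CompleteSpace E]
variable {F : Type*} [NormedAddCommGroup F] [Module ℂ F] [SMul Aᵐᵒᵖ F] [CStarModuleRight A F]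
  [CompleteSpace F]
variable {G : Type*} [NormedAddCommGroup G] [Module ℂ G] [SMul Aᵐᵒᵖ G] [CStarModuleRight A G]
  [CompleteSpace G]
variable {H : Type*} [NormedAddCommGroup H] [Module ℂ H] [SMul Aᵐᵒᵖ H] [CStarModuleRight A H]
  [CompleteSpace H]

/-- A closed quotient `t = b ∘ a⁻¹` of adjointable operators (with
`Null(a) ⊆ Null(b)` and `Null(a*) = {0}`) is graph regular, and `t* = (a*)⁻¹ ∘ b*`. -/
theorem closed_quotient_graphRegular (a : Adjointable A G E) (b : Adjointable A G F)
    (hker : ∀ x : G, a.toFun x = 0 → b.toFun x = 0)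
    (hkera : ∀ y : E, a.adjFun y = 0 → y = 0)
    (hclosed : IsClosed {p : E × F | ∃ x : G, p = (a.toFun x, b.toFun x)}) :
    (∃ u : CStarReg.Unbounded A E F,
      u.graph = {p : E × F | ∃ x : G, p = (a.toFun x, b.toFun x)}) ∧
    ∀ u : CStarReg.Unbounded A E F,
      u.graph = {p : E × F | ∃ x : G, p = (a.toFun x, b.toFun x)} →
        u.GraphRegular ∧ adjSet A u.graph = {q : F × E | a.adjFun q.2 = b.adjFun q.1} := by
  have hg : {p : E × F | ∃ x : G, p = (a.toFun x, b.toFun x)} =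
      Set.range fun x => (a.toFun x, b.toFun x) := by
    ext p
    exact exists_congr fun x => eq_comm
  rw [hg] at hclosed ⊢
  refine ⟨⟨Unbounded.quotient a b hker, rfl⟩, fun u hu => ⟨⟨?_, ?_, ?_⟩, ?_⟩⟩
  · change ortho A (Prod.fst '' u.graph) = {0}
    rw [hu, ← Set.range_comp, ← ortho_op (A := A) fun _ _ => rfl]
    refine a.toOp.ortho_range.trans (Set.eq_singleton_iff_unique_mem.mpr ⟨?_, hkera⟩)
    exact map_zero a.toOp.flip.toLinearMap
  · change ortho A (ortho A u.graph) = u.graph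
    rw [hu, ← ortho_op (A := A) (fun _ _ => rfl), ← ortho_op (A := A) (fun _ _ => rfl)]
    exact a.toOp.ortho_ortho_range_prod b.toOp hclosed
  · rw [hu, ← ortho_op (A := A) fun _ _ => rfl]
    exact a.toOp.range_prod_add_ortho b.toOp hclosed
  · rw [hu, ← adjSet_op (A := A) (fun _ _ => rfl) (fun _ _ => rfl)]
    exact a.toOp.adjSet_range_prod b.toOp

end Statements
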